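/- arXiv:1412.1659 — 2 statements merged into one kernel-verified Lean document; each statement's English description precedes it below -/
import Mathlib

section
/- For a symmetric composition algebra (S,*,q), the triality Lie algebra tri(S) = {(d₀,d₁,d₂) ∈ o(S,q)³ : d₀(x*y) = d₁(x)*y + x*d₂(y) for all x,y} is a Lie subalgebra of o(S,q)³, and the cyclic shift ϑ(d₀,d₁,d₂) = (d₂,d₀,d₁) is a Lie algebra automorphism of tri(S) of order three. -/
/-- The orthogonal Lie algebra `o(S,q)` of endomorphisms skew with respect to
the polar form of `q`. -/
def skewSet {S : Type*} [NonUnitalNonAssocRing S] [Module ℝ S]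
    (q : QuadraticForm ℝ S) : Set (Module.End ℝ S) :=
  {d | ∀ x y : S, QuadraticMap.polar q (d x) y + QuadraticMap.polar q x (d y) = 0}

/-- The triality Lie algebra
`tri(S) = {(d₀,d₁,d₂) ∈ o(S,q)³ : d₀(x*y) = d₁(x)*y + x*d₂(y)}`. -/
def triSet {S : Type*} [NonUnitalNonAssocRing S] [Module ℝ S]
    (q : QuadraticForm ℝ S) :
    Set (Module.End ℝ S × Module.End ℝ S × Module.End ℝ S) :=
  {t | t.1 ∈ skewSet q ∧ t.2.1 ∈ skewSet q ∧ t.2.2 ∈ skewSet q ∧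
    ∀ x y : S, t.1 (x * y) = (t.2.1 x) * y + x * (t.2.2 y)}

/-- The cyclic shift `ϑ(d₀,d₁,d₂) = (d₂,d₀,d₁)`. -/
def triShift {S : Type*} [NonUnitalNonAssocRing S] [Module ℝ S] :
    (Module.End ℝ S × Module.End ℝ S × Module.End ℝ S) →
    (Module.End ℝ S × Module.End ℝ S × Module.End ℝ S) :=
  fun t => (t.2.2, t.1, t.2.1)

/-! The defining identity of `tri(S)` is linear in the triple, and commutators of triples satisfy
it by expanding both sides, the mixed terms cancelling. For the cyclic shift, pair
`d₂ (x * y)` with an arbitrary `z`: skewness of `d₂` and associativity of the polar form turn this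
into `-polar q x (y * d₂ z)`, the identity for `(y, z)` rewrites `y * d₂ z`, and moving back gives
`d₀ x * y + x * d₁ y`; nondegeneracy of the polar form turns this into an equation in `S`. -/

open QuadraticMap

namespace skewSet

variable {S : Type*} [NonUnitalNonAssocRing S] [Module ℝ S] {q : QuadraticForm ℝ S}
  {d e : Module.End ℝ S}

theorem zero_mem : (0 : Module.End ℝ S) ∈ skewSet q := by
  intro x y
  simp

theorem add_mem (hd : d ∈ skewSet q) (he : e ∈ skewSet q) : d + e ∈ skewSet q := by
  intro x y
  simp only [LinearMap.add_apply, polar_add_left, polar_add_right]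
  linarith [hd x y, he x y]

theorem smul_mem (r : ℝ) (hd : d ∈ skewSet q) : r • d ∈ skewSet q := by
  intro x y
  simp only [LinearMap.smul_apply, polar_smul_left, polar_smul_right, smul_eq_mul]
  rw [← mul_add, hd x y, mul_zero]

theorem polar_apply_left (hd : d ∈ skewSet q) (x y : S) :
    polar q (d x) y = -polar q x (d y) :=
  eq_neg_of_add_eq_zero_left (hd x y)

theorem commutator_mem (hd : d ∈ skewSet q) (he : e ∈ skewSet q) :
    d * e - e * d ∈ skewSet q := by
  intro x y
  simp only [LinearMap.sub_apply, Module.End.mul_apply, polar_sub_left, polar_sub_right]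
  rw [polar_apply_left hd (e x) y, polar_apply_left he x (d y), polar_apply_left he (d x) y,
    polar_apply_left hd x (e y)]
  ring

end skewSet

section Triality

variable {S : Type*} [NonUnitalNonAssocRing S] [Module ℝ S] {q : QuadraticForm ℝ S}

theorem triality_rotate
    (hsym : ∀ x y z : S, polar q (x * y) z = polar q x (y * z))
    (hnondeg : ∀ x : S, (∀ y : S, polar q x y = 0) → x = 0)
    {d₀ d₁ d₂ : Module.End ℝ S} (h₀ : d₀ ∈ skewSet q) (h₂ : d₂ ∈ skewSet q)
    (h : ∀ x y : S, d₀ (x * y) = d₁ x * y + x * d₂ y) (x y : S) :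
    d₂ (x * y) = d₀ x * y + x * d₁ y := by
  refine sub_eq_zero.mp (hnondeg _ fun z => ?_)
  have hy : y * d₂ z = d₀ (y * z) - d₁ y * z := by
    rw [h y z]
    abel
  have hpair : polar q (d₂ (x * y)) z = polar q (d₀ x * y) z + polar q (x * d₁ y) z :=
    calc polar q (d₂ (x * y)) z
        = -polar q x (y * d₂ z) := by rw [skewSet.polar_apply_left h₂, hsym]
      _ = polar q (d₀ x) (y * z) + polar q x (d₁ y * z) := by
        rw [hy, polar_sub_right, skewSet.polar_apply_left h₀]
        ring
      _ = polar q (d₀ x * y) z + polar q (x * d₁ y) z := by rw [hsym, hsym]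
  rw [polar_sub_left, polar_add_left, hpair, sub_self]

namespace triSet

theorem zero_mem : (0 : Module.End ℝ S × Module.End ℝ S × Module.End ℝ S) ∈ triSet q :=
  ⟨skewSet.zero_mem, skewSet.zero_mem, skewSet.zero_mem, fun x y => by simp⟩

theorem add_mem {t u : Module.End ℝ S × Module.End ℝ S × Module.End ℝ S}
    (ht : t ∈ triSet q) (hu : u ∈ triSet q) : t + u ∈ triSet q := by
  obtain ⟨t₀, t₁, t₂, ht⟩ := ht
  obtain ⟨u₀, u₁, u₂, hu⟩ := hu
  refine ⟨skewSet.add_mem t₀ u₀, skewSet.add_mem t₁ u₁, skewSet.add_mem t₂ u₂, fun x y => ?_⟩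
  simp only [Prod.fst_add, Prod.snd_add, LinearMap.add_apply, ht, hu, add_mul, mul_add]
  abel

theorem smul_mem [SMulCommClass ℝ S S] [IsScalarTower ℝ S S] (r : ℝ)
    {t : Module.End ℝ S × Module.End ℝ S × Module.End ℝ S} (ht : t ∈ triSet q) :
    r • t ∈ triSet q := by
  obtain ⟨t₀, t₁, t₂, ht⟩ := ht
  refine ⟨skewSet.smul_mem r t₀, skewSet.smul_mem r t₁, skewSet.smul_mem r t₂, fun x y => ?_⟩
  simp only [Prod.smul_fst, Prod.smul_snd, LinearMap.smul_apply, ht, smul_add, smul_mul_assoc,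
    mul_smul_comm]

theorem commutator_mem {t u : Module.End ℝ S × Module.End ℝ S × Module.End ℝ S}
    (ht : t ∈ triSet q) (hu : u ∈ triSet q) :
    (t.1 * u.1 - u.1 * t.1, t.2.1 * u.2.1 - u.2.1 * t.2.1, t.2.2 * u.2.2 - u.2.2 * t.2.2) ∈
      triSet q := by
  obtain ⟨t₀, t₁, t₂, ht⟩ := ht
  obtain ⟨u₀, u₁, u₂, hu⟩ := hu
  refine ⟨skewSet.commutator_mem t₀ u₀, skewSet.commutator_mem t₁ u₁,
    skewSet.commutator_mem t₂ u₂, fun x y => ?_⟩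
  simp only [LinearMap.sub_apply, Module.End.mul_apply, ht, hu, map_add, sub_mul,
    mul_sub]
  abel

theorem triShift_mem
    (hsym : ∀ x y z : S, polar q (x * y) z = polar q x (y * z))
    (hnondeg : ∀ x : S, (∀ y : S, polar q x y = 0) → x = 0)
    {t : Module.End ℝ S × Module.End ℝ S × Module.End ℝ S} (ht : t ∈ triSet q) :
    triShift t ∈ triSet q :=
  let ⟨t₀, t₁, t₂, h⟩ := ht
  ⟨t₂, t₀, t₁, triality_rotate hsym hnondeg t₀ t₂ h⟩

end triSet

theorem triShift_comp_triShift_comp_triShift :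
    triShift ∘ triShift ∘ triShift = (id : Module.End ℝ S × Module.End ℝ S × Module.End ℝ S → _) :=
  rfl

theorem triShift_ne_id_or_subsingleton :
    triShift ≠ (id : Module.End ℝ S × Module.End ℝ S × Module.End ℝ S → _) ∨
      Subsingleton (Module.End ℝ S) := by
  refine or_iff_not_imp_right.mpr fun hS heq => hS ⟨fun a b => ?_⟩
  exact (congrArg Prod.fst (congrFun heq (a, b, b))).symm

end Triality

theorem stmt10_general {S : Type*} [NonUnitalNonAssocRing S] [Module ℝ S]
    [SMulCommClass ℝ S S] [IsScalarTower ℝ S S]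
    (q : QuadraticForm ℝ S)
    (hsym : ∀ x y z : S, QuadraticMap.polar q (x * y) z = QuadraticMap.polar q x (y * z))
    (hnondeg : ∀ x : S, (∀ y : S, QuadraticMap.polar q x y = 0) → x = 0) :
    -- tri(S) is a subspace closed under the componentwise bracket
    ((0 : Module.End ℝ S × Module.End ℝ S × Module.End ℝ S) ∈ triSet q) ∧
    (∀ t u, t ∈ triSet q → u ∈ triSet q → t + u ∈ triSet q) ∧
    (∀ (r : ℝ) t, t ∈ triSet q → r • t ∈ triSet q) ∧
    (∀ t u, t ∈ triSet q → u ∈ triSet q →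
      (t.1 * u.1 - u.1 * t.1, t.2.1 * u.2.1 - u.2.1 * t.2.1,
        t.2.2 * u.2.2 - u.2.2 * t.2.2) ∈ triSet q) ∧
    -- ϑ is an automorphism of tri(S) of order three
    (∀ t, t ∈ triSet q → triShift t ∈ triSet q) ∧
    (∀ t u : Module.End ℝ S × Module.End ℝ S × Module.End ℝ S,
      triShift (t + u) = triShift t + triShift u) ∧
    (∀ (r : ℝ) t, triShift (r • t) = r • triShift (t : Module.End ℝ S × Module.End ℝ S × Module.End ℝ S)) ∧
    (∀ t u : Module.End ℝ S × Module.End ℝ S × Module.End ℝ S,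
      triShift (t.1 * u.1 - u.1 * t.1, t.2.1 * u.2.1 - u.2.1 * t.2.1,
        t.2.2 * u.2.2 - u.2.2 * t.2.2) =
      ((triShift t).1 * (triShift u).1 - (triShift u).1 * (triShift t).1,
        (triShift t).2.1 * (triShift u).2.1 - (triShift u).2.1 * (triShift t).2.1,
        (triShift t).2.2 * (triShift u).2.2 - (triShift u).2.2 * (triShift t).2.2)) ∧
    (triShift ∘ triShift ∘ triShift = (id : (Module.End ℝ S × Module.End ℝ S × Module.End ℝ S) → _)) ∧
    (triShift ≠ (id : (Module.End ℝ S × Module.End ℝ S × Module.End ℝ S) → _) ∨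
      Subsingleton (Module.End ℝ S)) :=
  ⟨triSet.zero_mem, fun _ _ => triSet.add_mem, fun r _ => triSet.smul_mem r,
    fun _ _ => triSet.commutator_mem, fun _ => triSet.triShift_mem hsym hnondeg,
    fun _ _ => rfl, fun _ _ => rfl, fun _ _ => rfl,
    triShift_comp_triShift_comp_triShift, triShift_ne_id_or_subsingleton⟩

/-- For a real symmetric composition algebra `(S,*,q)`, the
triality Lie algebra is a Lie subalgebra of `o(S,q)³` (with componentwise
commutator bracket), and the cyclic shift `ϑ` is a Lie algebra automorphism of
`tri(S)` of order three. -/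
theorem stmt10 {S : Type*} [NonUnitalNonAssocRing S] [Module ℝ S]
    [SMulCommClass ℝ S S] [IsScalarTower ℝ S S]
    (q : QuadraticForm ℝ S)
    (hmul : ∀ x y : S, q (x * y) = q x * q y)
    (hsym : ∀ x y z : S, QuadraticMap.polar q (x * y) z = QuadraticMap.polar q x (y * z))
    (hnondeg : ∀ x : S, (∀ y : S, QuadraticMap.polar q x y = 0) → x = 0) :
    -- tri(S) is a subspace closed under the componentwise bracket
    ((0 : Module.End ℝ S × Module.End ℝ S × Module.End ℝ S) ∈ triSet q) ∧
    (∀ t u, t ∈ triSet q → u ∈ triSet q → t + u ∈ triSet q) ∧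
    (∀ (r : ℝ) t, t ∈ triSet q → r • t ∈ triSet q) ∧
    (∀ t u, t ∈ triSet q → u ∈ triSet q →
      (t.1 * u.1 - u.1 * t.1, t.2.1 * u.2.1 - u.2.1 * t.2.1,
        t.2.2 * u.2.2 - u.2.2 * t.2.2) ∈ triSet q) ∧
    -- ϑ is an automorphism of tri(S) of order three
    (∀ t, t ∈ triSet q → triShift t ∈ triSet q) ∧
    (∀ t u : Module.End ℝ S × Module.End ℝ S × Module.End ℝ S,
      triShift (t + u) = triShift t + triShift u) ∧
    (∀ (r : ℝ) t, triShift (r • t) = r • triShift (t : Module.End ℝ S × Module.End ℝ S × Module.End ℝ S)) ∧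
    (∀ t u : Module.End ℝ S × Module.End ℝ S × Module.End ℝ S,
      triShift (t.1 * u.1 - u.1 * t.1, t.2.1 * u.2.1 - u.2.1 * t.2.1,
        t.2.2 * u.2.2 - u.2.2 * t.2.2) =
      ((triShift t).1 * (triShift u).1 - (triShift u).1 * (triShift t).1,
        (triShift t).2.1 * (triShift u).2.1 - (triShift u).2.1 * (triShift t).2.1,
        (triShift t).2.2 * (triShift u).2.2 - (triShift u).2.2 * (triShift t).2.2)) ∧
    (triShift ∘ triShift ∘ triShift = (id : (Module.End ℝ S × Module.End ℝ S × Module.End ℝ S) → _)) ∧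
    (triShift ≠ (id : (Module.End ℝ S × Module.End ℝ S × Module.End ℝ S) → _) ∨
      Subsingleton (Module.End ℝ S)) :=
  stmt10_general q hsym hnondeg
end

section
/- For a symmetric composition algebra (S,*,q) and x, y ∈ S, the triple t_{x,y} = (σ_{x,y}, (1/2)q(x,y)id − r_x l_y, (1/2)q(x,y)id − l_x r_y) belongs to the triality Lie algebra tri(S,*,q), where σ_{x,y}(z) = q(x,z)y − q(y,z)x, l_x(z) = x*z, r_x(z) = z*x. -/
/-- `σ_{x,y}(z) = q(x,z)y − q(y,z)x`. -/
noncomputable def sigmaMap {S : Type*} [NonUnitalNonAssocRing S] [Module ℝ S]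
    (q : QuadraticForm ℝ S) (x y : S) : Module.End ℝ S :=
  (q.polarBilin x).smulRight y - (q.polarBilin y).smulRight x

/-- The triple `t_{x,y} = (σ_{x,y}, ½q(x,y)id − r_x l_y, ½q(x,y)id − l_x r_y)`. -/
noncomputable def tTriple {S : Type*} [NonUnitalNonAssocRing S] [Module ℝ S]
    [SMulCommClass ℝ S S] [IsScalarTower ℝ S S]
    (q : QuadraticForm ℝ S) (x y : S) :
    Module.End ℝ S × Module.End ℝ S × Module.End ℝ S :=
  (sigmaMap q x y,
    ((2 : ℝ)⁻¹ * QuadraticMap.polar q x y) • (LinearMap.id : S →ₗ[ℝ] S) -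
      (LinearMap.mulRight ℝ x) ∘ₗ (LinearMap.mulLeft ℝ y),
    ((2 : ℝ)⁻¹ * QuadraticMap.polar q x y) • (LinearMap.id : S →ₗ[ℝ] S) -
      (LinearMap.mulLeft ℝ x) ∘ₗ (LinearMap.mulRight ℝ y))

open QuadraticMap

section SymmetricComposition

variable {R S : Type*} [CommRing R] [NonUnitalNonAssocRing S] [Module R S]
  (q : QuadraticMap R S R)

theorem polar_mul_mul_right (hmul : ∀ x y : S, q (x * y) = q x * q y) (a b c : S) :
    polar q (a * c) (b * c) = polar q a b * q c := by
  simp only [polar, ← add_mul, hmul]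
  ring

theorem polar_mul_add_polar_mul (hmul : ∀ x y : S, q (x * y) = q x * q y) (a b c d : S) :
    polar q (a * c) (b * d) + polar q (a * d) (b * c) = polar q a b * polar q c d := by
  have h := polar_mul_mul_right q hmul a b (c + d)
  rw [mul_add, mul_add, polar_add_left, polar_add_right, polar_add_right,
    polar_mul_mul_right q hmul, polar_mul_mul_right q hmul] at h
  have hq : q (c + d) = polar q c d + q c + q d := by
    simp only [polar]
    ring
  rw [hq] at h
  linear_combination h

theorem polar_mul_mul_add_polar_mul_mul (hmul : ∀ x y : S, q (x * y) = q x * q y)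
    (hsym : ∀ x y z : S, polar q (x * y) z = polar q x (y * z)) (x y z w : S) :
    polar q ((y * z) * x) w + polar q z ((y * w) * x) = polar q x y * polar q z w := by
  have h₁ : polar q ((y * z) * x) w = polar q (y * z) (x * w) := hsym _ _ _
  have h₂ : polar q z ((y * w) * x) = polar q (y * w) (x * z) := by rw [polar_comm, hsym]
  linear_combination h₁ + h₂ + polar_mul_add_polar_mul q hmul y x z w
    + polar q z w * polar_comm q y x

theorem polar_mul_mul_add_polar_mul_mul' (hmul : ∀ x y : S, q (x * y) = q x * q y)
    (hsym : ∀ x y z : S, polar q (x * y) z = polar q x (y * z)) (x y z w : S) :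
    polar q (x * (z * y)) w + polar q z (x * (w * y)) = polar q x y * polar q z w := by
  have h₁ : polar q (x * (z * y)) w = polar q (w * x) (z * y) := by rw [polar_comm, ← hsym]
  have h₂ : polar q z (x * (w * y)) = polar q (z * x) (w * y) := (hsym _ _ _).symm
  linear_combination h₁ + h₂ + polar_mul_add_polar_mul q hmul w z x y
    + polar_comm q (z * x) (w * y) + polar q x y * polar_comm q w z

theorem mul_mul_add_mul_mul_eq_polar_smul (hmul : ∀ x y : S, q (x * y) = q x * q y)
    (hsym : ∀ x y z : S, polar q (x * y) z = polar q x (y * z))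
    (hnondeg : ∀ x : S, (∀ y : S, polar q x y = 0) → x = 0) (x y z : S) :
    x * (y * z) + z * (y * x) = polar q x z • y := by
  refine sub_eq_zero.mp (hnondeg _ fun w => ?_)
  rw [polar_sub_left, polar_add_left, polar_smul_left, smul_eq_mul,
    polar_comm q (x * (y * z)) w, ← hsym w x, polar_comm q (z * (y * x)) w, ← hsym w z,
    polar_comm q y w]
  linear_combination polar_mul_add_polar_mul q hmul w y x z

theorem mul_mul_add_mul_mul_eq_polar_smul' (hmul : ∀ x y : S, q (x * y) = q x * q y)
    (hsym : ∀ x y z : S, polar q (x * y) z = polar q x (y * z))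
    (hnondeg : ∀ x : S, (∀ y : S, polar q x y = 0) → x = 0) (x y z : S) :
    (x * y) * z + (z * y) * x = polar q x z • y := by
  refine sub_eq_zero.mp (hnondeg _ fun w => ?_)
  rw [polar_sub_left, polar_add_left, polar_smul_left, smul_eq_mul, hsym, hsym (z * y),
    polar_comm q (z * y)]
  linear_combination polar_mul_add_polar_mul q hmul x z y w

theorem mul_mul_mul_add_mul_mul_mul [SMulCommClass R S S]
    (hmul : ∀ x y : S, q (x * y) = q x * q y)
    (hsym : ∀ x y z : S, polar q (x * y) z = polar q x (y * z))
    (hnondeg : ∀ x : S, (∀ y : S, polar q x y = 0) → x = 0) (x y u v : S) :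
    ((y * u) * x) * v + u * (x * (v * y))
      = polar q x y • (u * v) - polar q x (u * v) • y + polar q y (u * v) • x := by
  have h₁ := mul_mul_add_mul_mul_eq_polar_smul' q hmul hsym hnondeg (y * u) x v
  have h₂ := mul_mul_add_mul_mul_eq_polar_smul q hmul hsym hnondeg (v * x) y u
  have h₃ := congrArg (u * ·) (mul_mul_add_mul_mul_eq_polar_smul q hmul hsym hnondeg y v x)
  have hyu : polar q (y * u) v = polar q y (u * v) := hsym y u v
  have hvx : polar q (v * x) u = polar q x (u * v) := by
    rw [polar_comm, ← hsym, polar_comm]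
  simp only [mul_add, mul_smul_comm] at h₃
  linear_combination (norm := module)
    h₁ - h₂ + h₃ + hyu • x - hvx • y + polar_comm q y x • (u * v)

end SymmetricComposition

section Triality

variable {S : Type*} [NonUnitalNonAssocRing S] [Module ℝ S] (q : QuadraticForm ℝ S)

theorem sigmaMap_mem_skewSet (x y : S) : sigmaMap q x y ∈ skewSet q := by
  intro z w
  simp only [sigmaMap, LinearMap.sub_apply, LinearMap.smulRight_apply, polarBilin_apply_apply,
    polar_sub_left, polar_sub_right, polar_smul_left, polar_smul_right, smul_eq_mul]
  linear_combination polar q x w * polar_comm q z y - polar q y w * polar_comm q z x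

theorem smul_id_sub_mem_skewSet {f : Module.End ℝ S} {k : ℝ}
    (hf : ∀ z w, polar q (f z) w + polar q z (f w) = k * polar q z w) :
    ((2 : ℝ)⁻¹ * k) • LinearMap.id - f ∈ skewSet q := by
  intro z w
  simp only [LinearMap.sub_apply, LinearMap.smul_apply, LinearMap.id_apply, polar_sub_left,
    polar_sub_right, polar_smul_left, polar_smul_right, smul_eq_mul]
  linear_combination -hf z w

theorem tTriple_triality [SMulCommClass ℝ S S] [IsScalarTower ℝ S S]
    (hmul : ∀ x y : S, q (x * y) = q x * q y)
    (hsym : ∀ x y z : S, polar q (x * y) z = polar q x (y * z))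
    (hnondeg : ∀ x : S, (∀ y : S, polar q x y = 0) → x = 0) (x y u v : S) :
    (tTriple q x y).1 (u * v) = (tTriple q x y).2.1 u * v + u * (tTriple q x y).2.2 v := by
  simp only [tTriple, sigmaMap, LinearMap.sub_apply, LinearMap.smulRight_apply,
    polarBilin_apply_apply, LinearMap.smul_apply, LinearMap.id_apply, LinearMap.comp_apply,
    LinearMap.mulLeft_apply, LinearMap.mulRight_apply, sub_mul, mul_sub, smul_mul_assoc,
    mul_smul_comm]
  linear_combination (norm := module) mul_mul_mul_add_mul_mul_mul q hmul hsym hnondeg x y u v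

end Triality

/-- For a real symmetric composition algebra `(S,*,q)` and
`x, y ∈ S`, the triple `t_{x,y}` belongs to the triality Lie algebra. -/
theorem stmt11 {S : Type*} [NonUnitalNonAssocRing S] [Module ℝ S]
    [SMulCommClass ℝ S S] [IsScalarTower ℝ S S]
    (q : QuadraticForm ℝ S)
    (hmul : ∀ x y : S, q (x * y) = q x * q y)
    (hsym : ∀ x y z : S, QuadraticMap.polar q (x * y) z = QuadraticMap.polar q x (y * z))
    (hnondeg : ∀ x : S, (∀ y : S, QuadraticMap.polar q x y = 0) → x = 0) :
    ∀ x y : S, tTriple q x y ∈ triSet q := fun x y =>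
  ⟨sigmaMap_mem_skewSet q x y,
    smul_id_sub_mem_skewSet q (polar_mul_mul_add_polar_mul_mul q hmul hsym x y),
    smul_id_sub_mem_skewSet q (polar_mul_mul_add_polar_mul_mul' q hmul hsym x y),
    tTriple_triality q hmul hsym hnondeg x y⟩
end
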